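/- Let U be a unitary operator on a complex Hilbert space H. Via the Cayley graph map 𝒞, the reflections in the lagrangians 𝒞(U) and in the vertical space H⁻ = 0 ⊕ H satisfy: R_{𝒞(U)} + R_{H⁻} is conjugate (by a fixed unitary Φ depending only on H⁺) to the block operator [[0, (1−U)*],[1−U, 0]]. Consequently R_{𝒞(U)} + R_{H⁻} lies in a two-sided ideal 𝓘 (in the sense that all its blocks do) if and only if 1 − U ∈ 𝓘. -/

import Mathlib

/-!
Both lagrangians are ranges of column operators `v ↦ (A v, B v)` with `A* A + B* B = c`
(`c = 4` for the Cayley graph of a unitary, `c = 1` for `H⁻`), so their projections are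
`c⁻¹ [[A A*, A B*], [B A*, B B*]]`. For unitary `U` this gives
`R_{𝒞(U)} = [[Re U, -Im U], [-Im U, -Re U]]` and `R_{H⁻} = [[-1, 0], [0, 1]]`, so with
`D = 1 - U` the sum is `[[-Re D, Im D], [Im D, Re D]]`, which `Φ` conjugates to `[[0, D*], [D, 0]]`.
Since `D* = -U* D`, an ideal containing `D` contains `D*`, hence `Re D` and `Im D`; conversely
`D = Re D + i Im D`.
-/

noncomputable section

variable (H : Type) [NormedAddCommGroup H] [InnerProductSpace ℂ H] [CompleteSpace H]

/-- `Ĥ = H ⊕ H` with the Hilbert (l²) structure. -/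
abbrev Hh := WithLp 2 (H × H)

/-- The identification `Ĥ ≃ H × H`. -/
def prodEq : Hh H ≃L[ℂ] H × H := WithLp.prodContinuousLinearEquiv 2 ℂ H H

/-- The Cayley graph map: `𝒞(U) = Ran {v ↦ ((1+U)v, -i(1-U)v)} ⊆ H ⊕ H`. -/
def cayleyGraph (U : H →L[ℂ] H) : Submodule ℂ (Hh H) :=
  LinearMap.range
    (((prodEq H).symm.toContinuousLinearMap ∘L
      ((1 + U).prod ((-Complex.I) • (1 - U)))) : H →L[ℂ] Hh H).toLinearMap

/-- The vertical space `H⁻ = 0 ⊕ H` inside `Ĥ`. -/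
def vertical : Submodule ℂ (Hh H) :=
  LinearMap.range
    (((prodEq H).symm.toContinuousLinearMap ∘L
      (ContinuousLinearMap.inr ℂ H H)) : H →L[ℂ] Hh H).toLinearMap

/-- The orthogonal reflection `R_L = 2 P_L - 1` in the closed subspace `L`. -/
def reflIn (L : Submodule ℂ (Hh H)) [L.HasOrthogonalProjection] : Hh H →L[ℂ] Hh H :=
  (2 : ℂ) • (L.subtypeL ∘L L.orthogonalProjectionOnto) - 1

/-- The change-of-basis unitary `Φ = Φ_{H⁺}`, which as a map `H × H → H × H` is
`(x, y) ↦ ((x - y)/√2, (-i x - i y)/√2)` (here `J⁻¹` on `H⁻` and `J` on `H⁺` act as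
`∓1` under the canonical identifications). -/
def PhiH : Hh H →L[ℂ] Hh H :=
  (prodEq H).symm.toContinuousLinearMap ∘L
    ((((Real.sqrt 2 : ℝ) : ℂ)⁻¹ •
        (ContinuousLinearMap.fst ℂ H H - ContinuousLinearMap.snd ℂ H H)).prod
      (((Real.sqrt 2 : ℝ) : ℂ)⁻¹ •
        ((-Complex.I) • (ContinuousLinearMap.fst ℂ H H + ContinuousLinearMap.snd ℂ H H)))) ∘L
    (prodEq H).toContinuousLinearMap

/-- The block operator `[[0, (1-U)*], [1-U, 0]]` on `Ĥ`. -/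
def blockB (U : H →L[ℂ] H) : Hh H →L[ℂ] Hh H :=
  (prodEq H).symm.toContinuousLinearMap ∘L
    (((ContinuousLinearMap.adjoint (1 - U)) ∘L ContinuousLinearMap.snd ℂ H H).prod
      ((1 - U) ∘L ContinuousLinearMap.fst ℂ H H)) ∘L
    (prodEq H).toContinuousLinearMap

/-- The four blocks of an operator on `Ĥ = H⁺ ⊕ H⁻`, as operators on `H`. -/
def block (A : Hh H →L[ℂ] Hh H) (i j : Bool) : H →L[ℂ] H :=
  (if i then ContinuousLinearMap.snd ℂ H H else ContinuousLinearMap.fst ℂ H H) ∘L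
    ((prodEq H).toContinuousLinearMap ∘L A ∘L (prodEq H).symm.toContinuousLinearMap) ∘L
    (if j then ContinuousLinearMap.inr ℂ H H else ContinuousLinearMap.inl ℂ H H)

open ContinuousLinearMap

theorem Submodule.starProjection_eq_of_adjoint_comp_self {𝕜 E F : Type*} [RCLike 𝕜]
    [NormedAddCommGroup E] [InnerProductSpace 𝕜 E] [CompleteSpace E]
    [NormedAddCommGroup F] [InnerProductSpace 𝕜 F] [CompleteSpace F]
    {T : F →L[𝕜] E} {c : ℝ} (hc : c ≠ 0) (hT : adjoint T ∘L T = (c : 𝕜) • 1)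
    {K : Submodule 𝕜 E} [K.HasOrthogonalProjection] (hK : K = LinearMap.range T.toLinearMap) :
    K.starProjection = (c : 𝕜)⁻¹ • (T ∘L adjoint T) := by
  have hT' (x : F) : adjoint T (T x) = (c : 𝕜) • x := by simpa using congr($hT x)
  ext z
  refine (K.eq_starProjection_of_mem_of_inner_eq_zero ?_ ?_)
  · rw [hK]
    exact ⟨(c : 𝕜)⁻¹ • adjoint T z, by simp⟩
  · rintro _ hw
    rw [hK] at hw
    obtain ⟨v, rfl⟩ := hw
    rw [smul_apply, comp_apply, coe_coe, ← adjoint_inner_left, map_sub, map_smul, hT', smul_smul,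
      inv_mul_cancel₀ (RCLike.ofReal_ne_zero.mpr hc), one_smul, sub_self, inner_zero_left]

namespace TwoSidedIdeal

theorem smul_mem {R A : Type*} [CommSemiring R] [Ring A] [Algebra R A]
    (I : TwoSidedIdeal A) (r : R) {a : A} (ha : a ∈ I) : r • a ∈ I := by
  rw [Algebra.smul_def]
  exact I.mul_mem_left _ _ ha

theorem star_one_sub_mem {A : Type*} [Ring A] [StarRing A] {u : A}
    (hu : u ∈ unitary A) (I : TwoSidedIdeal A) (h : 1 - u ∈ I) : star (1 - u) ∈ I := by
  have : star (1 - u) = -(star u * (1 - u)) := by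
    rw [star_sub, star_one, mul_sub, mul_one, Unitary.star_mul_self_of_mem hu, neg_sub]
  rw [this]
  exact I.neg_mem (I.mul_mem_left _ _ h)

open ComplexStarModule in
theorem realPart_mem_and_imaginaryPart_mem_iff {A : Type*} [Ring A] [StarRing A] [Algebra ℂ A]
    [StarModule ℂ A] (I : TwoSidedIdeal A) {a : A} (h : a ∈ I → star a ∈ I) :
    (ℜ a : A) ∈ I ∧ (ℑ a : A) ∈ I ↔ a ∈ I := by
  refine ⟨fun ⟨hre, him⟩ => ?_, fun ha => ?_⟩
  · rw [← realPart_add_I_smul_imaginaryPart a]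
    exact I.add_mem hre (I.smul_mem _ him)
  · rw [realPart_apply_coe, imaginaryPart_apply_coe]
    exact ⟨I.smul_mem _ (I.add_mem ha (h ha)),
      I.smul_mem _ (I.smul_mem _ (I.sub_mem ha (h ha)))⟩

end TwoSidedIdeal

section OperatorMatrices

variable {H}

def ofBlocks (A B C D : H →L[ℂ] H) : Hh H →L[ℂ] Hh H :=
  (prodEq H).symm.toContinuousLinearMap ∘L ((A.coprod B).prod (C.coprod D)) ∘L
    (prodEq H).toContinuousLinearMap

def column (A B : H →L[ℂ] H) : H →L[ℂ] Hh H :=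
  (prodEq H).symm.toContinuousLinearMap ∘L A.prod B

omit [CompleteSpace H] in
@[simp]
theorem prodEq_ofBlocks_apply (A B C D : H →L[ℂ] H) (z : Hh H) :
    prodEq H (ofBlocks A B C D z) =
      (A (prodEq H z).1 + B (prodEq H z).2, C (prodEq H z).1 + D (prodEq H z).2) := by
  simp [ofBlocks]

omit [CompleteSpace H] in
theorem ofBlocks_add_ofBlocks (A B C D A' B' C' D' : H →L[ℂ] H) :
    ofBlocks A B C D + ofBlocks A' B' C' D' = ofBlocks (A + A') (B + B') (C + C') (D + D') := by
  ext z
  apply (prodEq H).injective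
  simp only [map_add, add_apply, prodEq_ofBlocks_apply, Prod.mk_add_mk]
  abel_nf

omit [CompleteSpace H] in
theorem block_ofBlocks (A B C D : H →L[ℂ] H) (i j : Bool) :
    block H (ofBlocks A B C D) i j =
      bif i then (bif j then D else C) else (bif j then B else A) := by
  cases i <;> cases j <;> ext <;> simp [block, ofBlocks, prodEq]

omit [CompleteSpace H] in
theorem forall_block_ofBlocks_mem_iff {S : Type*} [SetLike S (H →L[ℂ] H)] (s : S)
    (A B C D : H →L[ℂ] H) :
    (∀ i j, block H (ofBlocks A B C D) i j ∈ s) ↔ A ∈ s ∧ B ∈ s ∧ C ∈ s ∧ D ∈ s := by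
  simp only [block_ofBlocks, Bool.forall_bool, cond_false, cond_true]
  tauto

theorem adjoint_column (A B : H →L[ℂ] H) :
    adjoint (column A B) = (adjoint A).coprod (adjoint B) ∘L (prodEq H).toContinuousLinearMap := by
  refine ((eq_adjoint_iff _ _).mpr fun z v => ?_).symm
  simp [column, prodEq, WithLp.prod_inner_apply, inner_add_left, adjoint_inner_left]

theorem adjoint_column_comp_column (A B : H →L[ℂ] H) :
    adjoint (column A B) ∘L column A B = adjoint A ∘L A + adjoint B ∘L B := by
  rw [adjoint_column]
  ext v
  simp [column]

theorem column_comp_adjoint_column (A B : H →L[ℂ] H) :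
    column A B ∘L adjoint (column A B) =
      ofBlocks (A ∘L adjoint A) (A ∘L adjoint B) (B ∘L adjoint A) (B ∘L adjoint B) := by
  rw [adjoint_column]
  ext z
  apply (prodEq H).injective
  simp [column]

theorem reflIn_eq_of_eq_range_column {A B : H →L[ℂ] H} {c : ℝ} (hc : c ≠ 0)
    (h : adjoint A ∘L A + adjoint B ∘L B = (c : ℂ) • 1) (L : Submodule ℂ (Hh H))
    [L.HasOrthogonalProjection] (hL : L = LinearMap.range (column A B).toLinearMap) :
    reflIn H L = (2 * (c : ℂ)⁻¹) •
      ofBlocks (A ∘L adjoint A) (A ∘L adjoint B) (B ∘L adjoint A) (B ∘L adjoint B) - 1 := by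
  rw [reflIn, ← Submodule.starProjection, Submodule.starProjection_eq_of_adjoint_comp_self hc
    (by rwa [adjoint_column_comp_column]) hL, column_comp_adjoint_column, smul_smul]
  rfl

end OperatorMatrices

section CayleyReflections

variable {H}

open ComplexStarModule Complex

theorem reflIn_vertical [(vertical H).HasOrthogonalProjection] :
    reflIn H (vertical H) = ofBlocks (-1) 0 0 1 := by
  have hV : adjoint (0 : H →L[ℂ] H) ∘L (0 : H →L[ℂ] H) + adjoint (1 : H →L[ℂ] H) ∘L 1 =
      ((1 : ℝ) : ℂ) • 1 := by
    rw [adjoint_one]; ext; simp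
  rw [reflIn_eq_of_eq_range_column one_ne_zero hV (vertical H) rfl]
  ext z
  apply (prodEq H).injective
  simp [adjoint_one, Prod.ext_iff, two_smul]

theorem reflIn_cayleyGraph {U : H →L[ℂ] H} (hU : U ∈ unitary (H →L[ℂ] H))
    [(cayleyGraph H U).HasOrthogonalProjection] :
    reflIn H (cayleyGraph H U) = ofBlocks (ℜ U) (-↑(ℑ U)) (-↑(ℑ U)) (-↑(ℜ U)) := by
  have hU_adj (x : H) : U (adjoint U x) = x := by
    simpa [star_eq_adjoint] using congr($(Unitary.mul_star_self_of_mem hU) x)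
  have hadj_U (x : H) : adjoint U (U x) = x := by
    simpa [star_eq_adjoint] using congr($(Unitary.star_mul_self_of_mem hU) x)
  have hC : adjoint (1 + U) ∘L (1 + U) + adjoint (-I • (1 - U)) ∘L (-I • (1 - U)) =
      ((4 : ℝ) : ℂ) • 1 := by
    ext x
    simp only [map_add, map_sub, map_neg, map_smulₛₗ, adjoint_one, conj_I, comp_add, add_comp,
      neg_neg, neg_smul, comp_neg, comp_smulₛₗ, RingHom.id_apply, comp_sub, smul_comp, sub_comp,
      add_apply, comp_apply, one_apply_eq_self, hadj_U, neg_apply, smul_apply, sub_apply,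
      ofReal_ofNat]
    match_scalars <;> ring_nf <;> rw [I_sq] <;> norm_num
  rw [reflIn_eq_of_eq_range_column (by norm_num) hC (cayleyGraph H U) rfl]
  ext z
  apply (prodEq H).injective
  simp only [map_add, map_sub, map_neg, map_smulₛₗ, adjoint_one, conj_I, ofReal_ofNat, comp_add,
    add_comp, neg_neg, comp_smulₛₗ, RingHom.id_apply, comp_sub, neg_smul, neg_comp, smul_comp,
    sub_comp, sub_neg_eq_add, smul_add, smul_neg, smul_smul, I_mul_I, one_smul, neg_sub, sub_apply,
    smul_apply, one_apply_eq_self, prodEq_ofBlocks_apply, add_apply, comp_apply, hU_adj, neg_apply,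
    Prod.smul_mk, realPart_apply_coe, star_eq_adjoint, imaginaryPart_apply_coe, neg_add_rev]
  refine Prod.ext ?_ ?_ <;> simp only [Prod.fst_sub, Prod.snd_sub] <;> match_scalars <;> ring

theorem reflIn_cayleyGraph_add_reflIn_vertical {U : H →L[ℂ] H} (hU : U ∈ unitary (H →L[ℂ] H))
    [(cayleyGraph H U).HasOrthogonalProjection] [(vertical H).HasOrthogonalProjection] :
    reflIn H (cayleyGraph H U) + reflIn H (vertical H) =
      ofBlocks (-↑(ℜ (1 - U))) (ℑ (1 - U)) (ℑ (1 - U)) (ℜ (1 - U)) := by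
  rw [reflIn_cayleyGraph hU, reflIn_vertical, ofBlocks_add_ofBlocks]
  have him : ℑ (1 : H →L[ℂ] H) = 0 := imaginaryPart_eq_zero_iff.mpr (IsSelfAdjoint.one _)
  simp only [map_sub, realPart_one, him, AddSubgroupClass.coe_sub, selfAdjoint.val_one,
    ZeroMemClass.coe_zero]
  congr 1 <;> abel

theorem blockB_eq_ofBlocks (U : H →L[ℂ] H) :
    blockB H U = ofBlocks 0 (adjoint (1 - U)) (1 - U) 0 := by
  ext z
  apply (prodEq H).injective
  simp [blockB]

theorem ofBlocks_realPart_imaginaryPart_comp_PhiH (D : H →L[ℂ] H) :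
    ofBlocks (-↑(ℜ D)) (ℑ D) (ℑ D) (ℜ D) ∘L PhiH H = PhiH H ∘L ofBlocks 0 (adjoint D) D 0 := by
  ext z
  apply (prodEq H).injective
  simp only [realPart_apply_coe, star_eq_adjoint, smul_add, neg_add_rev, imaginaryPart_apply_coe,
    neg_smul, PhiH, smul_neg, smul_smul, comp_apply, ContinuousLinearEquiv.coe_coe, prod_apply,
    smul_apply, sub_apply, coe_fst', coe_snd', add_apply, neg_apply, prodEq_ofBlocks_apply,
    ContinuousLinearEquiv.apply_symm_apply, map_smul, map_sub, map_add, map_neg, zero_apply,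
    zero_add, add_zero, Prod.mk.injEq]
  refine ⟨?_, ?_⟩ <;> match_scalars <;> ring_nf <;> rw [I_sq] <;> ring

end CayleyReflections

open ComplexStarModule in
/-- for a unitary `U`, the sum of the reflections in `𝒞(U)` and in the
vertical space `H⁻` is conjugate by `Φ` to the block operator `[[0, (1-U)*], [1-U, 0]]`;
consequently all blocks of `R_{𝒞(U)} + R_{H⁻}` lie in a two-sided ideal `𝓘` if and
only if `1 - U ∈ 𝓘`. -/
theorem reflection_sum_conjugate_and_ideal (U : H →L[ℂ] H) (hU : U ∈ unitary (H →L[ℂ] H))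
    [(cayleyGraph H U).HasOrthogonalProjection] [(vertical H).HasOrthogonalProjection]
    (𝓘 : TwoSidedIdeal (H →L[ℂ] H)) :
    ((reflIn H (cayleyGraph H U) + reflIn H (vertical H)) ∘L PhiH H = PhiH H ∘L blockB H U) ∧
    ((∀ i j : Bool, block H (reflIn H (cayleyGraph H U) + reflIn H (vertical H)) i j ∈ 𝓘) ↔
      (1 - U) ∈ 𝓘) := by
  rw [reflIn_cayleyGraph_add_reflIn_vertical hU, blockB_eq_ofBlocks]
  refine ⟨ofBlocks_realPart_imaginaryPart_comp_PhiH (1 - U), ?_⟩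
  rw [forall_block_ofBlocks_mem_iff, neg_mem_iff,
    ← 𝓘.realPart_mem_and_imaginaryPart_mem_iff (𝓘.star_one_sub_mem hU)]
  tauto
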